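/- For every a ∈ (0,1) and every α ∈ (a,1], the map f_a is not α-Hölder on [0,1]: there is no constant C such that |f_a(x) − f_a(y)| ≤ C·|x − y|^α for all x, y ∈ [0,1]. -/
import Mathlib


open Set MeasureTheory

/-- The piecewise-affine `b`-branched sawtooth map on `[0,1]`:
`g1 b x = b*x - k` on `[k/b,(k+1)/b]` for `k ∈ {0,…,b-1}` even, and
`g1 b x = (k+1) - b*x` there for `k` odd.  (For `x ∈ [0,1]`, the index
`k = min ⌊b*x⌋ (b-1)` is exactly the branch index; at common endpoints of two
branches both formulas agree, so this agrees with the piecewise definition.) -/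
noncomputable def g1 (b : ℕ) (x : ℝ) : ℝ :=
  let k : ℤ := min ⌊(b : ℝ) * x⌋ ((b : ℤ) - 1)
  if Even k then (b : ℝ) * x - (k : ℝ) else ((k : ℝ) + 1) - (b : ℝ) * x

/-- `g_{a,b} = q_a ∘ g_{1,b} ∘ q_a⁻¹`, where `q_a x = x ^ a` (real power). -/
noncomputable def gab (a : ℝ) (b : ℕ) (x : ℝ) : ℝ := (g1 b (x ^ a⁻¹)) ^ a

/-- For `x ∈ I_n = (2^{-n}, 2^{-n+1}]` (with `n ≥ 1`), `nIdx x = n`. -/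
noncomputable def nIdx (x : ℝ) : ℕ := (⌊Real.logb 2 x⁻¹⌋ + 1).toNat

/-- The map `f_a : [0,1] → [0,1]`: on each interval `I_n = (2^{-n}, 2^{-n+1}]` it is
`A_n⁻¹ ∘ g_{a,2n+1} ∘ A_n`, where `A_n x = 2^n x - 1`, and `f_a 0 = 0`. -/
noncomputable def fa (a : ℝ) (x : ℝ) : ℝ :=
  if x ≤ 0 then 0
  else (gab a (2 * nIdx x + 1) ((2 : ℝ) ^ nIdx x * x - 1) + 1) / (2 : ℝ) ^ nIdx x

lemma g1_eval (s : ℝ) (h0 : 0 ≤ s) (h1 : s ≤ 1/3) : g1 3 (2/3 + s) = 3 * s := by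
  have hfl : min ⌊(3 : ℝ) * (2/3 + s)⌋ (((3:ℕ) : ℤ) - 1) = 2 := by
    have h2 : (2 : ℤ) ≤ ⌊(3 : ℝ) * (2/3 + s)⌋ := by
      rw [Int.le_floor]; push_cast; linarith
    omega
  simp only [g1]
  norm_num
  have h2 : ⌊(3:ℝ) * (2/3 + s)⌋ ⊓ 2 = 2 := by
    have : (2:ℤ) ≤ ⌊(3:ℝ) * (2/3 + s)⌋ := by rw [Int.le_floor]; push_cast; linarith
    omega
  rw [h2]
  norm_num
  have hge : (2:ℝ) ≤ (⌊(3:ℝ) * (2/3 + s)⌋ : ℝ) := by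
    exact_mod_cast (by rw [Int.le_floor]; push_cast; linarith : (2:ℤ) ≤ ⌊(3:ℝ) * (2/3 + s)⌋)
  rw [min_eq_right hge]
  ring

lemma nIdx_eval (x : ℝ) (hx : 1/2 < x) (hx1 : x ≤ 1) : nIdx x = 1 := by
  have hfl : ⌊Real.logb 2 x⁻¹⌋ = 0 := by
    have h1 : (1:ℝ) ≤ x⁻¹ := (one_le_inv₀ (by linarith)).2 hx1
    have h2 : x⁻¹ < 2 := by
      rw [inv_lt_comm₀ (by linarith) (by norm_num)]; linarith
    have hlb1 : 0 ≤ Real.logb 2 x⁻¹ := Real.logb_nonneg (by norm_num) h1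
    have hlb2 : Real.logb 2 x⁻¹ < 1 := by
      have h := Real.logb_lt_logb (b := 2) (by norm_num) (by linarith) h2
      simpa using h
    rw [Int.floor_eq_zero_iff]
    exact Set.mem_Ico.2 ⟨hlb1, hlb2⟩
  unfold nIdx
  rw [hfl]; rfl

lemma fa_eval (a : ℝ) (ha : a ∈ Set.Ioo (0:ℝ) 1) (s : ℝ) (h0 : 0 ≤ s) (h1 : s ≤ 1/3) :
    fa a ((1 + (2/3 + s) ^ a) / 2) = ((3 * s) ^ a + 1) / 2 := by
  obtain ⟨ha0, ha1⟩ := ha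
  have hb0 : (0:ℝ) < 2/3 + s := by linarith
  have hpow_pos : 0 < (2/3 + s) ^ a := Real.rpow_pos_of_pos hb0 a
  have hpow_le : (2/3 + s) ^ a ≤ 1 := by
    have : (2/3 + s : ℝ) ≤ 1 := by linarith
    calc (2/3 + s) ^ a ≤ 1 ^ a := Real.rpow_le_rpow (le_of_lt hb0) this (le_of_lt ha0)
    _ = 1 := Real.one_rpow a
  set x := (1 + (2/3 + s) ^ a) / 2 with hxdef
  have hx2 : 1/2 < x := by rw [hxdef]; linarith
  have hx1 : x ≤ 1 := by rw [hxdef]; linarith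
  have hn : nIdx x = 1 := nIdx_eval x hx2 hx1
  have hxpos : ¬ x ≤ 0 := by linarith
  unfold fa
  rw [if_neg hxpos, hn]
  have harg : (2:ℝ) ^ (1:ℕ) * x - 1 = (2/3 + s) ^ a := by rw [hxdef]; ring
  rw [harg]
  have : gab a (2 * 1 + 1) ((2/3 + s) ^ a) = (3 * s) ^ a := by
    unfold gab
    rw [Real.rpow_rpow_inv (le_of_lt hb0) (ne_of_gt ha0)]
    norm_num [g1_eval s h0 h1]
  rw [this]
  norm_num

/-- For every `a ∈ (0,1)` and `α ∈ (a,1]`, the map `f_a` is not `α`-Hölder on `[0,1]`. -/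
theorem fa_not_alpha_holder (a : ℝ) (ha : a ∈ Set.Ioo (0 : ℝ) 1)
    (α : ℝ) (hα : α ∈ Set.Ioc a 1) :
    ¬ ∃ C : ℝ, ∀ x ∈ Set.Icc (0 : ℝ) 1, ∀ y ∈ Set.Icc (0 : ℝ) 1,
      |fa a x - fa a y| ≤ C * |x - y| ^ α := by
  rintro ⟨C, hC⟩
  obtain ⟨ha0, ha1⟩ := ha
  obtain ⟨haα, hα1⟩ := hα
  set C' : ℝ := max C 1 with hC'def
  have hC'1 : (1:ℝ) ≤ C' := le_max_right _ _
  have hC'0 : (0:ℝ) < C' := by linarith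
  have ht : 0 < α - a := by linarith
  -- choose s
  set s : ℝ := min (1/3) ((3 * C')⁻¹ ^ (α - a)⁻¹) with hsdef
  have h3C : (0:ℝ) < 3 * C' := by linarith
  have hs0 : 0 < s := lt_min (by norm_num) (Real.rpow_pos_of_pos (inv_pos.2 h3C) _)
  have hs13 : s ≤ 1/3 := min_le_left _ _
  have hskey : 3 * C' ≤ s ^ (a - α) := by
    have h1 : s ≤ ((3 * C')⁻¹) ^ (α - a)⁻¹ := min_le_right _ _
    have h2 : s ^ (α - a) ≤ (3 * C')⁻¹ := by
      calc s ^ (α - a) ≤ (((3 * C')⁻¹) ^ (α - a)⁻¹) ^ (α - a) :=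
            Real.rpow_le_rpow (le_of_lt hs0) h1 (le_of_lt ht)
      _ = (3 * C')⁻¹ := Real.rpow_inv_rpow (le_of_lt (inv_pos.2 h3C)) (ne_of_gt ht)
    have hp : 0 < s ^ (α - a) := Real.rpow_pos_of_pos hs0 _
    have e1 : (3 * C') * s ^ (α - a) ≤ 1 := by
      have := mul_le_mul_of_nonneg_left h2 (le_of_lt h3C)
      rwa [mul_inv_cancel₀ (ne_of_gt h3C)] at this
    have e2 : s ^ (α - a) * (s ^ (α - a))⁻¹ = 1 := mul_inv_cancel₀ (ne_of_gt hp)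
    have h3 : 3 * C' ≤ (s ^ (α - a))⁻¹ := by nlinarith [e1, e2, hp, inv_pos.2 hp]
    calc 3 * C' ≤ (s ^ (α - a))⁻¹ := h3
    _ = s ^ (a - α) := by rw [← Real.rpow_neg (le_of_lt hs0)]; ring_nf
  have hCC' : C ≤ C' := le_max_left _ _
  clear_value C'
  clear_value s
  clear hsdef hC'def
  -- the two points
  have hkey0 := fa_eval a ⟨ha0, ha1⟩ 0 le_rfl (by norm_num)
  have hkeys := fa_eval a ⟨ha0, ha1⟩ s (le_of_lt hs0) hs13
  set x := (1 + (2/3 + s) ^ a) / 2 with hxdef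
  set y : ℝ := (1 + (2/3 + (0:ℝ)) ^ a) / 2 with hydef
  have hpow_posx : 0 < (2/3 + s) ^ a := Real.rpow_pos_of_pos (by linarith) a
  have hpow_lex : (2/3 + s) ^ a ≤ 1 := by
    calc (2/3 + s) ^ a ≤ 1 ^ a := Real.rpow_le_rpow (by linarith) (by linarith) (le_of_lt ha0)
    _ = 1 := Real.one_rpow a
  have hpow_posy : 0 < (2/3 + (0:ℝ)) ^ a := Real.rpow_pos_of_pos (by norm_num) a
  have hpow_ley : (2/3 + (0:ℝ)) ^ a ≤ 1 := by
    calc (2/3 + (0:ℝ)) ^ a ≤ 1 ^ a := Real.rpow_le_rpow (by norm_num) (by norm_num) (le_of_lt ha0)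
    _ = 1 := Real.one_rpow a
  have hxI : x ∈ Set.Icc (0:ℝ) 1 := ⟨by rw [hxdef]; linarith, by rw [hxdef]; linarith⟩
  have hyI : y ∈ Set.Icc (0:ℝ) 1 := ⟨by rw [hydef]; linarith, by rw [hydef]; linarith⟩
  have hfa_diff : fa a x - fa a y = (3 * s) ^ a / 2 := by
    rw [hkeys, hkey0, show (3:ℝ) * 0 = 0 by ring, Real.zero_rpow (ne_of_gt ha0)]
    ring
  -- bound on |x - y|
  have hxy_le : |x - y| ≤ s := by
    have hmono : (2/3 + (0:ℝ)) ^ a ≤ (2/3 + s) ^ a :=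
      Real.rpow_le_rpow (by norm_num) (by linarith) (le_of_lt ha0)
    have hub : (2/3 + s) ^ a - (2/3 + 0) ^ a ≤ (3/2) * s := by
      have h23 : (2/3 + s : ℝ) = (2/3) * (1 + (3/2) * s) := by ring
      have hfac : (2/3 + s) ^ a = (2/3:ℝ) ^ a * (1 + (3/2) * s) ^ a := by
        rw [h23, Real.mul_rpow (by norm_num) (by nlinarith)]
      have hone : (1 + (3/2) * s : ℝ) ^ a ≤ 1 + (3/2) * s := by
        calc (1 + (3/2) * s : ℝ) ^ a ≤ (1 + (3/2) * s) ^ (1:ℝ) :=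
              Real.rpow_le_rpow_of_exponent_le (by nlinarith) (le_of_lt ha1)
        _ = 1 + (3/2) * s := Real.rpow_one _
      have h23le : ((2/3:ℝ)) ^ a ≤ 1 := by
        calc ((2/3:ℝ)) ^ a ≤ 1 ^ a := Real.rpow_le_rpow (by norm_num) (by norm_num) (le_of_lt ha0)
        _ = 1 := Real.one_rpow a
      have h23pos : (0:ℝ) < (2/3:ℝ) ^ a := Real.rpow_pos_of_pos (by norm_num) a
      calc (2/3 + s) ^ a - (2/3 + 0) ^ a
          = (2/3:ℝ) ^ a * (1 + (3/2) * s) ^ a - (2/3:ℝ) ^ a := by rw [hfac]; norm_num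
      _ ≤ (2/3:ℝ) ^ a * (1 + (3/2) * s) - (2/3:ℝ) ^ a := by
            have := mul_le_mul_of_nonneg_left hone (le_of_lt h23pos); linarith
      _ = (2/3:ℝ) ^ a * ((3/2) * s) := by ring
      _ ≤ (3/2) * s := by
            have := mul_le_mul_of_nonneg_right h23le (by linarith : (0:ℝ) ≤ (3/2) * s)
            linarith
    have : x - y = ((2/3 + s) ^ a - (2/3 + 0) ^ a) / 2 := by rw [hxdef, hydef]; ring
    rw [this, abs_of_nonneg (by linarith)]
    linarith
  -- derive contradiction
  have hHolder := hC x hxI y hyI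
  rw [hfa_diff] at hHolder
  have habs : |(3 * s) ^ a / 2| = (3 * s) ^ a / 2 := by
    have : 0 < (3 * s) ^ a := Real.rpow_pos_of_pos (by linarith) a
    exact abs_of_pos (by linarith)
  rw [habs] at hHolder
  -- C * |x-y|^α ≤ C' * s^α
  have hxyα : |x - y| ^ α ≤ s ^ α :=
    Real.rpow_le_rpow (abs_nonneg _) hxy_le (by linarith)
  have hRHS : C * |x - y| ^ α ≤ C' * s ^ α := by
    have h1 : C * |x - y| ^ α ≤ C' * |x - y| ^ α :=
      mul_le_mul_of_nonneg_right hCC' (Real.rpow_nonneg (abs_nonneg _) α)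
    have h2 : C' * |x - y| ^ α ≤ C' * s ^ α := mul_le_mul_of_nonneg_left hxyα (le_of_lt hC'0)
    linarith
  -- lower bound: (3s)^a / 2 ≥ s^a / 2 ≥ (3/2) C' s^α > C' s^α
  have hlow1 : s ^ a ≤ (3 * s) ^ a :=
    Real.rpow_le_rpow (le_of_lt hs0) (by linarith) (le_of_lt ha0)
  have hsplit : s ^ a = s ^ (a - α) * s ^ α := by
    rw [← Real.rpow_add hs0]; ring_nf
  have hsα : 0 < s ^ α := Real.rpow_pos_of_pos hs0 α
  have hlow2 : 3 * C' * s ^ α ≤ s ^ a := by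
    rw [hsplit]
    exact mul_le_mul_of_nonneg_right hskey (le_of_lt hsα)
  have hp : 0 < C' * s ^ α := mul_pos hC'0 hsα
  have : C' * s ^ α < (3 * s) ^ a / 2 := by linarith
  linarith
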